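/- (Catastrophic market failure with identical distributions as K → ∞.) Suppose all idiosyncratic hazards are equal and independent of K: A_i(ε) = A(ε) > 0 for every i = 1, …, K. With τ_(K) = max(τ_1, …, τ_K), the probability of a catastrophic market failure satisfies lim_{K → ∞} P(τ_(K) ≤ ε) = 1 − e^{−A_0(ε)} = P(η_0 ≤ ε); i.e., as the number of G-SIBs tends to infinity, the probability that all banks default within [0, ε] converges to the probability that a market-wide stress event occurs by time ε. -/

import Mathlib

/-!
By continuity and monotonicity of the cumulative hazard, `η ≤ ε` holds exactly when
`Z ≤ A(ε)`. The event that every bank has defaulted by `ε` is therefore the disjoint union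
`{Z₀ ≤ A₀(ε)} ∪ ({Z₀ > A₀(ε)} ∩ ⋂ᵢ {Zᵢ ≤ A(ε)})`, whose probability is, by independence,
`(1 - e^{-A₀(ε)}) + e^{-A₀(ε)} (1 - e^{-A(ε)})^K`. The second term vanishes as `K → ∞`
because `1 - e^{-A(ε)} < 1`.
-/

open MeasureTheory ProbabilityTheory

/-- The cumulative hazard `A(t) = ∫_0^t α(s) ds`. -/
noncomputable def cumHaz (α : ℝ → ℝ) (t : ℝ) : ℝ := ∫ s in (0:ℝ)..t, α s

/-- The first time `s ≥ 0` at which the cumulative hazard reaches level `z`,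
i.e. `inf {s ≥ 0 : A(s) ≥ z}`. -/
noncomputable def hitTime (α : ℝ → ℝ) (z : ℝ) : ℝ :=
  sInf {s : ℝ | 0 ≤ s ∧ z ≤ cumHaz α s}

open Filter Set

section CumulativeHazard

variable {α : ℝ → ℝ}

lemma cumHaz_zero (α : ℝ → ℝ) : cumHaz α 0 = 0 := intervalIntegral.integral_same

lemma intervalIntegrable_of_continuousOn_Ici (hcont : ContinuousOn α (Ici 0)) {s t : ℝ}
    (hs : 0 ≤ s) (ht : 0 ≤ t) : IntervalIntegrable α volume s t :=
  (hcont.mono fun _ hx => (le_min hs ht).trans hx.1).intervalIntegrable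

lemma monotoneOn_cumHaz (hnonneg : ∀ t, 0 ≤ t → 0 ≤ α t)
    (hcont : ContinuousOn α (Ici 0)) :
    MonotoneOn (cumHaz α) (Ici 0) := fun _ hs _ ht hst =>
  intervalIntegral.integral_mono_interval le_rfl hs hst
    ((ae_restrict_mem measurableSet_Ioc).mono fun u hu => hnonneg u hu.1.le)
    (intervalIntegrable_of_continuousOn_Ici hcont le_rfl ht)

lemma cumHaz_nonneg (hnonneg : ∀ t, 0 ≤ t → 0 ≤ α t) (hcont : ContinuousOn α (Ici 0))
    {t : ℝ} (ht : 0 ≤ t) : 0 ≤ cumHaz α t :=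
  cumHaz_zero α ▸ monotoneOn_cumHaz hnonneg hcont self_mem_Ici ht ht

lemma continuousOn_cumHaz (hcont : ContinuousOn α (Ici 0)) :
    ContinuousOn (cumHaz α) (Ici 0) := by
  intro x (hx : 0 ≤ x)
  have hIcc : ContinuousWithinAt (cumHaz α) (Icc 0 (x + 1)) x := by
    apply intervalIntegral.continuousWithinAt_primitive (measure_singleton x)
    simpa [max_eq_right (by linarith : (0 : ℝ) ≤ x + 1)] using
      intervalIntegrable_of_continuousOn_Ici hcont le_rfl (by linarith : (0 : ℝ) ≤ x + 1)
  rw [← Ici_inter_Iic] at hIcc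
  exact (continuousWithinAt_inter (Iic_mem_nhds (by linarith))).mp hIcc

lemma hitTime_le_iff (hnonneg : ∀ t, 0 ≤ t → 0 ≤ α t) (hcont : ContinuousOn α (Ici 0))
    (hinf : Tendsto (cumHaz α) atTop atTop) {ε : ℝ} (hε : 0 ≤ ε) (z : ℝ) :
    hitTime α z ≤ ε ↔ z ≤ cumHaz α ε := by
  have hbdd : BddBelow {s : ℝ | 0 ≤ s ∧ z ≤ cumHaz α s} := ⟨0, fun _ hs => hs.1⟩
  refine ⟨fun h => ?_, fun h => csInf_le hbdd ⟨hε, h⟩⟩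
  have hclosed : IsClosed {s : ℝ | 0 ≤ s ∧ z ≤ cumHaz α s} :=
    (continuousOn_cumHaz hcont).preimage_isClosed_of_isClosed isClosed_Ici isClosed_Ici
  obtain ⟨s, hzs, hs⟩ := ((hinf.eventually_ge_atTop z).and (eventually_ge_atTop 0)).exists
  have hmem := hclosed.csInf_mem ⟨s, hs, hzs⟩ hbdd
  exact hmem.2.trans (monotoneOn_cumHaz hnonneg hcont hmem.1 hε h)

end CumulativeHazard

section CommonShock

variable {Ω β : Type*} [MeasurableSpace Ω] [MeasurableSpace β] {P : Measure Ω}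

lemma measure_le_eq_one_sub_exp [IsProbabilityMeasure P] {X : Ω → ℝ} (hX : Measurable X)
    {c : ℝ} (hsurv : P {ω | c < X ω} = ENNReal.ofReal (Real.exp (-c))) :
    P {ω | X ω ≤ c} = ENNReal.ofReal (1 - Real.exp (-c)) := by
  have hcompl : {ω | X ω ≤ c} = {ω | c < X ω}ᶜ := by ext; simp
  rw [hcompl, prob_compl_eq_one_sub (measurableSet_lt measurable_const hX), hsurv,
    ENNReal.ofReal_sub _ (Real.exp_nonneg _), ENNReal.ofReal_one]

lemma measure_forall_or_eq {ι : Type*} {X : ι → Ω → β} (hmeas : ∀ i, Measurable (X i))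
    (hindep : iIndepFun X P) {j : ι} {I : Finset ι} (hj : j ∉ I) {S₀ : Set β}
    (hS₀ : MeasurableSet S₀) {S : ι → Set β} (hS : ∀ i, MeasurableSet (S i)) :
    P {ω | ∀ i ∈ I, X j ω ∈ S₀ ∨ X i ω ∈ S i} =
      P (X j ⁻¹' S₀) + P (X j ⁻¹' S₀ᶜ) * ∏ i ∈ I, P (X i ⁻¹' S i) := by
  classical
  set T : ι → Set β := Function.update S j S₀ᶜ
  have hTj : T j = S₀ᶜ := Function.update_self _ _ _
  have hT : ∀ i ∈ I, T i = S i := fun i hi =>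
    Function.update_of_ne (ne_of_mem_of_not_mem hi hj) _ _
  have hsplit : {ω | ∀ i ∈ I, X j ω ∈ S₀ ∨ X i ω ∈ S i} =
      X j ⁻¹' S₀ ∪ ⋂ i ∈ insert j I, X i ⁻¹' T i := by
    ext ω
    simp only [mem_ofPred_eq, mem_union, mem_iInter, Finset.mem_insert, forall_eq_or_imp,
      mem_preimage, hTj, mem_compl_iff]
    by_cases h₀ : X j ω ∈ S₀
    · simp [h₀]
    · simp only [h₀, false_or, not_false_eq_true, true_and]
      exact forall₂_congr fun i hi => by rw [hT i hi]
  have hdisj : Disjoint (X j ⁻¹' S₀) (⋂ i ∈ insert j I, X i ⁻¹' T i) :=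
    disjoint_left.mpr fun ω h₀ h => by
      have hj' := mem_iInter₂.mp h j (Finset.mem_insert_self j I)
      rw [mem_preimage, hTj] at hj'
      exact hj' h₀
  have hTmeas : ∀ i, MeasurableSet (T i) := fun i => by
    by_cases hi : i = j
    · subst hi; simpa [T] using hS₀.compl
    · simpa [T, hi] using hS i
  rw [hsplit, measure_union hdisj (Finset.measurableSet_biInter _ fun i _ => hmeas i (hTmeas i)),
    hindep.measure_inter_preimage_eq_mul _ fun i _ => hTmeas i, Finset.prod_insert hj,
    Finset.prod_congr rfl fun i hi => by rw [hT i hi]]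
  simp [T]

lemma tendsto_measure_forall_or [IsProbabilityMeasure P] {X : ℕ → Ω → β}
    (hmeas : ∀ i, Measurable (X i)) (hindep : iIndepFun X P) {S₀ S : Set β}
    (hS₀ : MeasurableSet S₀) (hS : MeasurableSet S) {q : ENNReal} (hq : q < 1)
    (hXS : ∀ i, 1 ≤ i → P (X i ⁻¹' S) = q) :
    Tendsto (fun K : ℕ => P {ω | ∀ i, 1 ≤ i → i ≤ K → X 0 ω ∈ S₀ ∨ X i ω ∈ S})
      atTop (nhds (P (X 0 ⁻¹' S₀))) := by
  have hK : ∀ K : ℕ, P {ω | ∀ i, 1 ≤ i → i ≤ K → X 0 ω ∈ S₀ ∨ X i ω ∈ S} =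
      P (X 0 ⁻¹' S₀) + P (X 0 ⁻¹' S₀ᶜ) * q ^ K := fun K => by
    have hprod : ∏ i ∈ Finset.Icc 1 K, P (X i ⁻¹' S) = q ^ K := by
      rw [Finset.prod_congr rfl fun i hi => hXS i (Finset.mem_Icc.mp hi).1, Finset.prod_const,
        Nat.card_Icc, Nat.add_sub_cancel]
    rw [← hprod, ← measure_forall_or_eq hmeas hindep (j := 0) (by simp) hS₀ fun _ => hS]
    simp only [Finset.mem_Icc, and_imp]
  simp_rw [hK]
  have hpow := ENNReal.Tendsto.const_mul (ENNReal.tendsto_pow_atTop_nhds_zero_of_lt_one hq)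
    (a := P (X 0 ⁻¹' S₀ᶜ)) (Or.inr (measure_ne_top _ _))
  simpa using tendsto_const_nhds.add hpow

end CommonShock

theorem catastrophic_market_failure_iid_limit_general
    {Ω : Type*} [MeasurableSpace Ω] (P : Measure Ω) [IsProbabilityMeasure P]
    (Z : ℕ → Ω → ℝ) (α₀ α : ℝ → ℝ)
    (hZmeas : ∀ i, Measurable (Z i))
    (hZindep : iIndepFun Z P)
    (hZexp : ∀ i, ∀ t : ℝ, 0 ≤ t → P {ω | t < Z i ω} = ENNReal.ofReal (Real.exp (-t)))
    (hα₀pos : ∀ t, 0 ≤ t → 0 < α₀ t) (hαpos : ∀ t, 0 ≤ t → 0 < α t)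
    (hα₀cont : ContinuousOn α₀ (Set.Ici 0)) (hαcont : ContinuousOn α (Set.Ici 0))
    (hA₀inf : Filter.Tendsto (cumHaz α₀) Filter.atTop Filter.atTop)
    (hAinf : Filter.Tendsto (cumHaz α) Filter.atTop Filter.atTop)
    (ε : ℝ) (hε : 0 < ε) :
    Filter.Tendsto
      (fun K : ℕ => P {ω | ∀ i : ℕ, 1 ≤ i → i ≤ K →
          min (hitTime α₀ (Z 0 ω)) (hitTime α (Z i ω)) ≤ ε})
      Filter.atTop (nhds (ENNReal.ofReal (1 - Real.exp (-cumHaz α₀ ε))))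
    ∧ ENNReal.ofReal (1 - Real.exp (-cumHaz α₀ ε)) = P {ω | hitTime α₀ (Z 0 ω) ≤ ε} := by
  have hα₀ : ∀ t, 0 ≤ t → 0 ≤ α₀ t := fun t ht => (hα₀pos t ht).le
  have hα : ∀ t, 0 ≤ t → 0 ≤ α t := fun t ht => (hαpos t ht).le
  have hη₀ := hitTime_le_iff hα₀ hα₀cont hA₀inf hε.le
  have hη := hitTime_le_iff hα hαcont hAinf hε.le
  have hlaw₀ :
      P {ω | hitTime α₀ (Z 0 ω) ≤ ε} = ENNReal.ofReal (1 - Real.exp (-cumHaz α₀ ε)) := by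
    simp_rw [hη₀]
    exact measure_le_eq_one_sub_exp (hZmeas 0) (hZexp 0 _ (cumHaz_nonneg hα₀ hα₀cont hε.le))
  refine ⟨?_, hlaw₀.symm⟩
  rw [← hlaw₀]
  simp_rw [min_le_iff, hη₀, hη]
  refine tendsto_measure_forall_or hZmeas hZindep (S₀ := Iic (cumHaz α₀ ε))
    (S := Iic (cumHaz α ε)) measurableSet_Iic measurableSet_Iic ?_ fun i _ =>
      measure_le_eq_one_sub_exp (hZmeas i) (hZexp i _ (cumHaz_nonneg hα hαcont hε.le))
  rw [ENNReal.ofReal_lt_one]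
  linarith [Real.exp_pos (-cumHaz α ε)]

/-- (Catastrophic market failure with identical distributions as `K → ∞`.)
With an infinite sequence of banks all sharing the idiosyncratic hazard `α` (so that
`A_i(ε) = A(ε) > 0` for all `i`), `τ_i = min (η_0, η_i)` and `τ_(K) = max (τ_1, …, τ_K)`,
`lim_{K → ∞} P(τ_(K) ≤ ε) = 1 − e^{−A_0(ε)} = P(η_0 ≤ ε)`. -/
theorem catastrophic_market_failure_iid_limit
    {Ω : Type*} [MeasurableSpace Ω] (P : Measure Ω) [IsProbabilityMeasure P]
    (Z : ℕ → Ω → ℝ) (α₀ α : ℝ → ℝ)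
    (hZmeas : ∀ i, Measurable (Z i))
    (hZindep : iIndepFun Z P)
    (hZexp : ∀ i, ∀ t : ℝ, 0 ≤ t → P {ω | t < Z i ω} = ENNReal.ofReal (Real.exp (-t)))
    (hα₀pos : ∀ t, 0 ≤ t → 0 < α₀ t) (hαpos : ∀ t, 0 ≤ t → 0 < α t)
    (hα₀cont : ContinuousOn α₀ (Set.Ici 0)) (hαcont : ContinuousOn α (Set.Ici 0))
    (hA₀inf : Filter.Tendsto (cumHaz α₀) Filter.atTop Filter.atTop)
    (hAinf : Filter.Tendsto (cumHaz α) Filter.atTop Filter.atTop)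
    (ε : ℝ) (hε : 0 < ε) (hAε : 0 < cumHaz α ε) :
    Filter.Tendsto
      (fun K : ℕ => P {ω | ∀ i : ℕ, 1 ≤ i → i ≤ K →
          min (hitTime α₀ (Z 0 ω)) (hitTime α (Z i ω)) ≤ ε})
      Filter.atTop (nhds (ENNReal.ofReal (1 - Real.exp (-cumHaz α₀ ε))))
    ∧ ENNReal.ofReal (1 - Real.exp (-cumHaz α₀ ε)) = P {ω | hitTime α₀ (Z 0 ω) ≤ ε} :=
  catastrophic_market_failure_iid_limit_general P Z α₀ α hZmeas hZindep hZexp hα₀pos hαpos hα₀cont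
    hαcont hA₀inf hAinf ε hε
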